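/- A nonempty operator A ⊆ Z is maximal monotone if and only if A is representable and of NI type, i.e., if and only if A is representable and h_A(z) ≥ p(z) for every z ∈ Z. -/

import Mathlib

open Pointwise Filter Topology

noncomputable section

variable {E F : Type*} [NormedAddCommGroup E] [NormedSpace ℝ E]
  [NormedAddCommGroup F] [NormedSpace ℝ F]

/-- Duality pairing `p(x, x*) = x*(x)` on `E × E*` (the dual carrying the weak-star topology). -/
def pairing (z : E × WeakDual ℝ E) : ℝ := z.2 z.1

/-- Natural dual product `(x,x*)·(y,y*) = x*(y) + y*(x)`. -/
def dprod (z w : E × WeakDual ℝ E) : ℝ := z.2 w.1 + w.2 z.1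

/-- A (graph of a) multivalued operator is monotone. -/
def MonotoneSet (A : Set (E × WeakDual ℝ E)) : Prop :=
  ∀ a ∈ A, ∀ b ∈ A, 0 ≤ (a.2 - b.2) (a.1 - b.1)

/-- Maximal monotone: monotone and maximal with respect to inclusion among monotone sets. -/
def MaximalMonotoneSet (A : Set (E × WeakDual ℝ E)) : Prop :=
  MonotoneSet A ∧ ∀ B, MonotoneSet B → A ⊆ B → A = B

/-- Fitzpatrick function `h_A(z) = sup_{a ∈ A} (z·a − p(a))`. -/
def fitz (A : Set (E × WeakDual ℝ E)) (z : E × WeakDual ℝ E) : EReal :=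
  ⨆ a ∈ A, ((dprod z a - pairing a : ℝ) : EReal)

/-- Conjugate with respect to the natural dual product. -/
def econj (g : E × WeakDual ℝ E → EReal) (w : E × WeakDual ℝ E) : EReal :=
  ⨆ z, ((dprod w z : ℝ) : EReal) - g z

/-- Penot function `φ_A = (h_A)*`. -/
def penot (A : Set (E × WeakDual ℝ E)) : E × WeakDual ℝ E → EReal := econj (fitz A)

/-- Convexity for extended-real-valued functions. -/
def EConvex (h : E × WeakDual ℝ E → EReal) : Prop :=
  ∀ z w : E × WeakDual ℝ E, ∀ a b : ℝ, 0 ≤ a → 0 ≤ b → a + b = 1 →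
    h (a • z + b • w) ≤ (a : EReal) * h z + (b : EReal) * h w

/-- `h` is a representative of `A`: proper, convex, lower semicontinuous in the
strong × weak-star topology (the product topology of `E × WeakDual ℝ E`),
`h ≥ p` everywhere and `A = {h = p}`. -/
def IsRepresentative (h : E × WeakDual ℝ E → EReal) (A : Set (E × WeakDual ℝ E)) : Prop :=
  (∀ z, h z ≠ ⊥) ∧ (∃ z, h z ≠ ⊤) ∧ EConvex h ∧ LowerSemicontinuous h ∧
  (∀ z, (pairing z : EReal) ≤ h z) ∧ A = {z | h z = (pairing z : EReal)}

/-- An operator is representable if it admits a representative. -/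
def Representable (A : Set (E × WeakDual ℝ E)) : Prop := ∃ h, IsRepresentative h A

/-- Domain of a multivalued operator. -/
def opDom (A : Set (E × WeakDual ℝ E)) : Set E := {x | ∃ u, (x, u) ∈ A}

/-- Sum of multivalued operators: `A + B = {(x, u+v) : (x,u) ∈ A, (x,v) ∈ B}`. -/
def opSum (A B : Set (E × WeakDual ℝ E)) : Set (E × WeakDual ℝ E) :=
  {z | ∃ u v, (z.1, u) ∈ A ∧ (z.1, v) ∈ B ∧ z.2 = u + v}

/-- The adjoint `L* y* = y* ∘ L`. -/
def adjoint (L : E →L[ℝ] F) (g : WeakDual ℝ F) : WeakDual ℝ E :=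
  ContinuousLinearMap.comp (g : F →L[ℝ] ℝ) L

/-- The composition `L* M L = {(x, L* y*) : (Lx, y*) ∈ M}`. -/
def opComp (L : E →L[ℝ] F) (M : Set (F × WeakDual ℝ F)) : Set (E × WeakDual ℝ E) :=
  {z | ∃ g, (L z.1, g) ∈ M ∧ z.2 = adjoint L g}

/-- `0 ∈ ^{ic}S`: the union `⋃_{n ≥ 1} n • S` is a closed linear subspace. -/
def ZeroInIC {G : Type*} [AddCommGroup G] [Module ℝ G] [TopologicalSpace G] (S : Set G) : Prop :=
  ∃ W : Submodule ℝ G, ((W : Set G) = ⋃ (n : ℕ) (_ : 1 ≤ n), (n : ℝ) • S) ∧ IsClosed (W : Set G)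

end


/-! ### Auxiliary lemmas for the proof -/

noncomputable section AuxProof

variable {E : Type*} [NormedAddCommGroup E] [NormedSpace ℝ E]

lemma dprod_comm (z w : E × WeakDual ℝ E) : dprod z w = dprod w z := by
  simp [dprod]; ring

lemma key_ident (z a : E × WeakDual ℝ E) :
    dprod z a - pairing a = pairing z - (z.2 - a.2) (z.1 - a.1) := by
  have h1 : (z.2 - a.2) (z.1 - a.1) = z.2 z.1 - z.2 a.1 - a.2 z.1 + a.2 a.1 := by
    have : (z.2 - a.2) (z.1 - a.1) = z.2 (z.1 - a.1) - a.2 (z.1 - a.1) := rfl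
    rw [this, map_sub, map_sub]; ring
  simp [dprod, pairing, h1]; ring

lemma flip_ident (z a : E × WeakDual ℝ E) :
    (z.2 - a.2) (z.1 - a.1) = (a.2 - z.2) (a.1 - z.1) := by
  have h1 : (z.2 - a.2) (z.1 - a.1) = z.2 z.1 - z.2 a.1 - a.2 z.1 + a.2 a.1 := by
    have : (z.2 - a.2) (z.1 - a.1) = z.2 (z.1 - a.1) - a.2 (z.1 - a.1) := rfl
    rw [this, map_sub, map_sub]; ring
  have h2 : (a.2 - z.2) (a.1 - z.1) = a.2 a.1 - a.2 z.1 - z.2 a.1 + z.2 z.1 := by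
    have : (a.2 - z.2) (a.1 - z.1) = a.2 (a.1 - z.1) - z.2 (a.1 - z.1) := rfl
    rw [this, map_sub, map_sub]; ring
  rw [h1, h2]; ring

lemma dprod_smul_add (a b : ℝ) (z w v : E × WeakDual ℝ E) :
    dprod (a • z + b • w) v = a * dprod z v + b * dprod w v := by
  have h1 : (a • z + b • w).1 = a • z.1 + b • w.1 := rfl
  have h2 : (a • z + b • w).2 = a • z.2 + b • w.2 := rfl
  have h3 : (a • z.2 + b • w.2) v.1 = a * z.2 v.1 + b * w.2 v.1 := rfl
  simp [dprod, h1, h2, h3, map_add, map_smul]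
  ring

lemma pairing_smul_add (a b : ℝ) (z w : E × WeakDual ℝ E) :
    pairing (a • z + b • w) =
      a^2 * pairing z + a * b * dprod z w + b^2 * pairing w := by
  have h1 : (a • z + b • w).1 = a • z.1 + b • w.1 := rfl
  have h3 : ((a • z + b • w).2) ((a • z + b • w).1)
      = a * z.2 (a • z.1 + b • w.1) + b * w.2 (a • z.1 + b • w.1) := rfl
  have h4 : ∀ x : E, (a • z.2 + b • w.2) x = a * z.2 x + b * w.2 x := fun _ => rfl
  simp [pairing, dprod, h1, h3, h4, map_add, map_smul]
  ring

lemma econvex_affine (w : E × WeakDual ℝ E) (β : ℝ) :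
    EConvex (fun z => ((dprod z w - β : ℝ) : EReal)) := by
  intro z z' a b ha hb hab
  dsimp only
  have : dprod (a • z + b • z') w - β = a * (dprod z w - β) + b * (dprod z' w - β) := by
    rw [dprod_smul_add]; linear_combination β * hab
  rw [this]
  push_cast
  rfl

lemma econvex_sup {f g : E × WeakDual ℝ E → EReal} (hf : EConvex f) (hg : EConvex g) :
    EConvex (fun z => max (f z) (g z)) := by
  intro z w a b ha hb hab
  have hae : (0:EReal) ≤ (a:EReal) := by exact_mod_cast ha
  have hbe : (0:EReal) ≤ (b:EReal) := by exact_mod_cast hb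
  refine max_le ((hf z w a b ha hb hab).trans ?_) ((hg z w a b ha hb hab).trans ?_)
  · exact add_le_add (mul_le_mul_of_nonneg_left (le_max_left _ _) hae)
      (mul_le_mul_of_nonneg_left (le_max_left _ _) hbe)
  · exact add_le_add (mul_le_mul_of_nonneg_left (le_max_right _ _) hae)
      (mul_le_mul_of_nonneg_left (le_max_right _ _) hbe)

lemma econvex_iSup {ι : Sort*} {f : ι → E × WeakDual ℝ E → EReal}
    (hf : ∀ i, EConvex (f i)) : EConvex (fun z => ⨆ i, f i z) := by
  intro z w a b ha hb hab
  have hae : (0:EReal) ≤ (a:EReal) := by exact_mod_cast ha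
  have hbe : (0:EReal) ≤ (b:EReal) := by exact_mod_cast hb
  refine iSup_le fun i => (hf i z w a b ha hb hab).trans ?_
  exact add_le_add (mul_le_mul_of_nonneg_left (le_iSup (fun i => f i z) i) hae)
    (mul_le_mul_of_nonneg_left (le_iSup (fun i => f i w) i) hbe)

lemma econvex_affine_sub (w : E × WeakDual ℝ E) (c : EReal) (hc : c ≠ ⊥) :
    EConvex (fun z => ((dprod z w : ℝ) : EReal) - c) := by
  induction c with
  | bot => exact absurd rfl hc
  | coe r =>
      have := econvex_affine w r
      intro z z' a b ha hb hab
      have e : ∀ u : E × WeakDual ℝ E, ((dprod u w : ℝ) : EReal) - (r : EReal)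
          = ((dprod u w - r : ℝ) : EReal) := by intro u; norm_cast
      dsimp only
      rw [e, e, e]; exact this z z' a b ha hb hab
  | top =>
      intro z z' a b ha hb hab
      simp

lemma fitz_le_of_rel {A : Set (E × WeakDual ℝ E)} {z : E × WeakDual ℝ E}
    (hrel : ∀ a ∈ A, 0 ≤ (z.2 - a.2) (z.1 - a.1)) :
    fitz A z ≤ (pairing z : EReal) := by
  refine iSup₂_le fun a ha => ?_
  have := hrel a ha
  have h := key_ident z a
  exact_mod_cast (by linarith : dprod z a - pairing a ≤ pairing z)

lemma le_fitz_of_mem {A : Set (E × WeakDual ℝ E)} {z : E × WeakDual ℝ E} (hz : z ∈ A) :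
    (pairing z : EReal) ≤ fitz A z := by
  have : ((dprod z z - pairing z : ℝ) : EReal) ≤ fitz A z := le_iSup₂_of_le z hz le_rfl
  have e : dprod z z - pairing z = pairing z := by simp [dprod, pairing]
  rwa [e] at this

lemma lt_fitz_of_bad {A : Set (E × WeakDual ℝ E)} {z : E × WeakDual ℝ E}
    {a : E × WeakDual ℝ E} (ha : a ∈ A) (hbad : (z.2 - a.2) (z.1 - a.1) < 0) :
    (pairing z : EReal) < fitz A z := by
  have h := key_ident z a
  have : (pairing z : EReal) < ((dprod z a - pairing a : ℝ) : EReal) := by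
    exact_mod_cast (by linarith : pairing z < dprod z a - pairing a)
  exact this.trans_le (le_iSup₂_of_le a ha le_rfl)

lemma econvex_fitz (A : Set (E × WeakDual ℝ E)) : EConvex (fitz A) := by
  have : EConvex (fun z => ⨆ a, ⨆ _ : a ∈ A, ((dprod z a - pairing a : ℝ) : EReal)) :=
    econvex_iSup fun a => econvex_iSup fun _ => econvex_affine a (pairing a)
  exact this

lemma lsc_fitz (A : Set (E × WeakDual ℝ E)) : LowerSemicontinuous (fitz A) := by
  have : LowerSemicontinuous
      (fun z => ⨆ a, ⨆ _ : a ∈ A, ((dprod z a - pairing a : ℝ) : EReal)) := by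
    refine lowerSemicontinuous_iSup fun a => lowerSemicontinuous_iSup fun _ => ?_
    have hc : Continuous fun z : E × WeakDual ℝ E => dprod z a - pairing a := by
      have h1 : Continuous fun z : E × WeakDual ℝ E => z.2 a.1 :=
        (WeakDual.eval_continuous a.1).comp continuous_snd
      have h2 : Continuous fun z : E × WeakDual ℝ E => a.2 z.1 :=
        a.2.continuous.comp continuous_fst
      exact (h1.add h2).sub continuous_const
    exact (continuous_coe_real_ereal.comp hc).lowerSemicontinuous
  exact this

lemma midpoint_mono {h : E × WeakDual ℝ E → EReal} (hconv : EConvex h)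
    (hp : ∀ z, (pairing z : EReal) ≤ h z) {a b : E × WeakDual ℝ E}
    (hha : h a = (pairing a : EReal)) (hhb : h b = (pairing b : EReal)) :
    0 ≤ (a.2 - b.2) (a.1 - b.1) := by
  have hc := hconv a b (1/2) (1/2) (by norm_num) (by norm_num) (by norm_num)
  rw [hha, hhb] at hc
  have hle := (hp ((1/2 : ℝ) • a + (1/2 : ℝ) • b)).trans hc
  have e1 : ((1/2 : ℝ) : EReal) * (pairing a : EReal) + ((1/2 : ℝ) : EReal) * (pairing b : EReal)
      = ((1/2 * pairing a + 1/2 * pairing b : ℝ) : EReal) := by norm_cast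
  rw [e1] at hle
  have hre : pairing ((1/2 : ℝ) • a + (1/2 : ℝ) • b) ≤ 1/2 * pairing a + 1/2 * pairing b := by
    exact_mod_cast hle
  rw [pairing_smul_add] at hre
  have key : dprod a b ≤ pairing a + pairing b := by nlinarith
  have e2 : (a.2 - b.2) (a.1 - b.1) = pairing a + pairing b - dprod a b := by
    have h1 : (a.2 - b.2) (a.1 - b.1) = a.2 (a.1 - b.1) - b.2 (a.1 - b.1) := rfl
    rw [h1, map_sub, map_sub]; simp [pairing, dprod]; ring
  linarith [key, e2.ge, e2.le]

lemma segment_lemma {k : E × WeakDual ℝ E → EReal} (hconv : EConvex k)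
    (hp : ∀ z, (pairing z : EReal) ≤ k z) {z₀ : E × WeakDual ℝ E}
    (hk0 : k z₀ = (pairing z₀ : EReal)) (z : E × WeakDual ℝ E) :
    ((dprod z z₀ - pairing z₀ : ℝ) : EReal) ≤ k z := by
  rcases eq_top_or_lt_top (k z) with htop | hlt
  · rw [htop]; exact le_top
  have hbot : k z ≠ ⊥ := ((EReal.bot_lt_coe _).trans_le (hp z)).ne'
  set r : ℝ := (k z).toReal with hr
  have hkz : k z = (r : EReal) := (EReal.coe_toReal hlt.ne hbot).symm
  set D : ℝ := dprod z z₀ with hD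
  set P : ℝ := pairing z with hP
  set Q : ℝ := pairing z₀ with hQ
  have key : ∀ t ∈ Set.Ioo (0:ℝ) 1, t * (D - Q) + (1 - t) * P ≤ r := by
    rintro t ⟨ht0, ht1⟩
    have hc := hconv z z₀ (1 - t) t (by linarith) (by linarith) (by ring)
    rw [hkz, hk0] at hc
    have e1 : ((1 - t : ℝ) : EReal) * (r : EReal) + (t : ℝ) * ((Q : ℝ) : EReal)
        = (((1 - t) * r + t * Q : ℝ) : EReal) := by norm_cast
    rw [e1] at hc
    have hge := (hp ((1 - t : ℝ) • z + t • z₀)).trans hc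
    have hre : pairing ((1 - t : ℝ) • z + t • z₀) ≤ (1 - t) * r + t * Q := by
      exact_mod_cast hge
    rw [pairing_smul_add] at hre
    have expand : (1-t)^2 * P + (1-t) * t * D + t^2 * Q ≤ (1 - t) * r + t * Q := by
      rw [← hP, ← hQ, ← hD] at hre; exact hre
    have h1t : (0:ℝ) < 1 - t := by linarith
    have h2 : (1 - t) * (t * (D - Q) + (1 - t) * P) ≤ (1 - t) * r := by nlinarith
    exact le_of_mul_le_mul_left h2 h1t
  have hlim : Tendsto (fun t : ℝ => t * (D - Q) + (1 - t) * P) (𝓝[Set.Ioo (0:ℝ) 1] 1)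
      (𝓝 (D - Q)) := by
    have hc : Continuous fun t : ℝ => t * (D - Q) + (1 - t) * P :=
      (continuous_id.mul continuous_const).add ((continuous_const.sub continuous_id).mul continuous_const)
    have := hc.tendsto 1
    simp only [one_mul, sub_self, zero_mul, add_zero] at this
    exact this.mono_left nhdsWithin_le_nhds
  have hne : (𝓝[Set.Ioo (0:ℝ) 1] (1:ℝ)).NeBot := by
    refine mem_closure_iff_nhdsWithin_neBot.1 ?_
    rw [closure_Ioo (by norm_num : (0:ℝ) ≠ 1)]
    exact ⟨by norm_num, le_rfl⟩
  have hfin : D - Q ≤ r :=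
    le_of_tendsto hlim (eventually_nhdsWithin_of_forall key)
  rw [hkz]
  exact_mod_cast hfin

/-- evaluation at a point as a linear map on the weak dual -/
def evalLin (x : E) : WeakDual ℝ E →ₗ[ℝ] ℝ where
  toFun f := f x
  map_add' _ _ := rfl
  map_smul' _ _ := rfl

lemma eval_char (ψ : WeakDual ℝ E →L[ℝ] ℝ) : ∃ v : E, ∀ f : WeakDual ℝ E, ψ f = f v := by
  have hU : (ψ ⁻¹' Metric.ball (0:ℝ) 1) ∈ 𝓝 (0 : WeakDual ℝ E) := by
    have h0 : ψ 0 = 0 := map_zero ψ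
    exact ψ.continuous.continuousAt.preimage_mem_nhds (by simp [h0, Metric.ball_mem_nhds])
  obtain ⟨V, hV, hVU⟩ := ((topDualPairing ℝ E).hasBasis_weakBilin.mem_iff).1 hU
  obtain ⟨s, r, hr, rfl⟩ := (SeminormFamily.basisSets_iff _).1 hV
  have hker : ∀ f : WeakDual ℝ E, (∀ x ∈ s, f x = 0) → ψ f = 0 := by
    intro f hf
    have hmem : ∀ n : ℕ,
        ((n : ℝ) • f) ∈ (s.sup ((topDualPairing ℝ E).toSeminormFamily)).ball 0 r := by
      intro n
      refine (Seminorm.mem_ball_zero _).2 ?_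
      refine lt_of_le_of_lt (Seminorm.finset_sup_apply_le le_rfl fun x hx => ?_) hr
      show ‖((n:ℝ) • f) x‖ ≤ 0
      have hz : ((n:ℝ) • f) x = (n:ℝ) * f x := rfl
      rw [hz, hf x hx, mul_zero, norm_zero]
    have hsmall : ∀ n : ℕ, (n : ℝ) * |ψ f| < 1 := by
      intro n
      have h1 : ψ ((n : ℝ) • f) ∈ Metric.ball (0:ℝ) 1 := hVU (hmem n)
      simpa [Real.dist_eq] using h1
    by_contra hne
    have hpos : 0 < |ψ f| := abs_pos.2 hne
    obtain ⟨n, hn⟩ := exists_nat_gt (1 / |ψ f|)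
    have := hsmall n
    rw [div_lt_iff₀ hpos] at hn
    linarith
  have hsub : (⨅ x : s, LinearMap.ker (evalLin (E := E) (x : E))) ≤
      LinearMap.ker (ψ : WeakDual ℝ E →ₗ[ℝ] ℝ) := by
    intro f hf
    rw [Submodule.mem_iInf] at hf
    exact hker f fun x hx => hf ⟨x, hx⟩
  have hspan := mem_span_of_iInf_ker_le_ker hsub
  haveI : Fintype s := FinsetCoe.fintype s
  obtain ⟨c, hc⟩ := (Submodule.mem_span_range_iff_exists_fun ℝ).1 hspan
  refine ⟨∑ x : s, c x • (x : E), fun f => ?_⟩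
  have h4 := congrArg (fun L : WeakDual ℝ E →ₗ[ℝ] ℝ => L f) hc
  simp only [LinearMap.coe_sum, Finset.sum_apply, LinearMap.smul_apply] at h4
  rw [ContinuousLinearMap.coe_coe] at h4
  rw [← h4, map_sum]
  refine Finset.sum_congr rfl fun x _ => ?_
  rw [map_smul]
  rfl

lemma dprod_smul_right (z : E × WeakDual ℝ E) (t : ℝ) (w : E × WeakDual ℝ E) :
    dprod z (t • w) = t * dprod z w := by
  have h1 : (t • w).1 = t • w.1 := rfl
  have h2 : (t • w).2 = t • w.2 := rfl
  have h3 : (t • w.2) z.1 = t * w.2 z.1 := rfl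
  simp [dprod, h1, h2, h3, map_smul]
  ring

lemma dprod_add_right (z w w' : E × WeakDual ℝ E) :
    dprod z (w + w') = dprod z w + dprod z w' := by
  have h1 : (w + w').1 = w.1 + w'.1 := rfl
  have h2 : (w + w').2 = w.2 + w'.2 := rfl
  have h3 : (w.2 + w'.2) z.1 = w.2 z.1 + w'.2 z.1 := rfl
  simp [dprod, h1, h2, h3, map_add]
  ring

/-- coerce a continuous linear functional into the weak dual (identity on terms). -/
def toWeak (g : E →L[ℝ] ℝ) : WeakDual ℝ E := g

lemma dual_char (φ : (E × WeakDual ℝ E) →L[ℝ] ℝ) :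
    ∃ w : E × WeakDual ℝ E, ∀ z, φ z = dprod z w := by
  set φ1 : E →L[ℝ] ℝ := φ.comp (ContinuousLinearMap.inl ℝ E (WeakDual ℝ E)) with hφ1
  set φ2 : WeakDual ℝ E →L[ℝ] ℝ := φ.comp (ContinuousLinearMap.inr ℝ E (WeakDual ℝ E)) with hφ2
  obtain ⟨v, hv⟩ := eval_char φ2
  refine ⟨(v, toWeak φ1), fun z => ?_⟩
  have hz : z = (z.1, 0) + (0, z.2) := by simp
  have e1 : φ1 z.1 = φ (z.1, 0) := rfl
  have e2 : φ2 z.2 = φ (0, z.2) := rfl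
  have hsplit : φ z = φ1 z.1 + φ2 z.2 := by
    rw [e1, e2, ← map_add, ← hz]
  rw [hsplit, hv z.2]
  show φ1 z.1 + z.2 v = z.2 v + (toWeak φ1) z.1
  rw [add_comm]
  rfl

noncomputable instance : LocallyConvexSpace ℝ (WeakDual ℝ E) := WeakBilin.locallyConvexSpace

lemma fm_point {h : E × WeakDual ℝ E → EReal} (hconv : EConvex h)
    (hlsc : LowerSemicontinuous h) (hp : ∀ z, (pairing z : EReal) ≤ h z)
    {a₀ : E × WeakDual ℝ E} {r₀ : ℝ} (ha₀ : h a₀ = (r₀ : EReal))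
    {z₀ : E × WeakDual ℝ E} {c : ℝ} (hc : (c : EReal) < h z₀) :
    ∃ w β, (∀ z, ((dprod z w - β : ℝ) : EReal) ≤ h z) ∧ c < dprod z₀ w - β := by
  classical
  set S : Set ((E × WeakDual ℝ E) × ℝ) := {q | h q.1 ≤ (q.2 : EReal)} with hS
  -- convexity of the epigraph
  have hSconv : Convex ℝ S := by
    rintro p hp' q hq' a b ha hb hab
    have h1 : (a • p + b • q).1 = a • p.1 + b • q.1 := rfl
    have h2 : (a • p + b • q).2 = a * p.2 + b * q.2 := rfl
    show h (a • p + b • q).1 ≤ (((a • p + b • q).2 : ℝ) : EReal)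
    rw [h1, h2]
    refine (hconv p.1 q.1 a b ha hb hab).trans ?_
    have e : ((a * p.2 + b * q.2 : ℝ) : EReal) = (a : EReal) * (p.2 : EReal) + (b : EReal) * (q.2 : EReal) := by
      norm_cast
    rw [e]
    exact add_le_add (mul_le_mul_of_nonneg_left hp' (by exact_mod_cast ha))
      (mul_le_mul_of_nonneg_left hq' (by exact_mod_cast hb))
  -- closedness of the epigraph
  have hSclosed : IsClosed S := by
    rw [← isOpen_compl_iff, isOpen_iff_mem_nhds]
    rintro ⟨z, ρ⟩ hq
    have hlt : ((ρ : ℝ) : EReal) < h z := not_le.1 hq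
    obtain ⟨c', hc1, hc2⟩ := EReal.exists_between_coe_real hlt
    have hev : {z' : E × WeakDual ℝ E | (c' : EReal) < h z'} ∈ 𝓝 z := hlsc z _ hc2
    have hρc : ρ < c' := by exact_mod_cast hc1
    rw [nhds_prod_eq]
    refine mem_of_superset (Filter.prod_mem_prod hev (Iio_mem_nhds hρc)) ?_
    rintro ⟨z', r'⟩ ⟨hz', hr'⟩
    simp only [Set.mem_setOf_eq] at hz'
    intro habs
    have : ((r' : ℝ) : EReal) < (c' : EReal) := by exact_mod_cast hr'
    exact absurd (habs.trans_lt this) (not_lt.2 hz'.le)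
  -- separation helper
  have sep : ∀ q : (E × WeakDual ℝ E) × ℝ, q ∉ S → ∃ (φ : (E × WeakDual ℝ E) →L[ℝ] ℝ) (s u : ℝ),
      (∀ p ∈ S, φ p.1 + s * p.2 < u) ∧ u < φ q.1 + s * q.2 := by
    intro q hq
    obtain ⟨f, u, hfS, hfq⟩ := geometric_hahn_banach_closed_point hSconv hSclosed hq
    set φ : (E × WeakDual ℝ E) →L[ℝ] ℝ := f.comp (ContinuousLinearMap.inl ℝ (E × WeakDual ℝ E) ℝ) with hφ
    set s : ℝ := f (0, 1) with hs
    have hsplit : ∀ (z : E × WeakDual ℝ E) (r : ℝ), f (z, r) = φ z + r * s := by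
      intro z r
      have hzr : ((z, r) : (E × WeakDual ℝ E) × ℝ) = (z, (0:ℝ)) + r • ((0 : E × WeakDual ℝ E), (1 : ℝ)) := by
        simp [Prod.ext_iff]
      rw [hzr, map_add, map_smul, smul_eq_mul]
      rfl
    refine ⟨φ, s, u, fun p hp' => ?_, ?_⟩
    · have := hfS p hp'
      rw [← Prod.mk.eta (p := p), hsplit p.1 p.2] at this
      linarith [this]
    · have := hfq
      rw [← Prod.mk.eta (p := q), hsplit q.1 q.2] at this
      linarith [this]
  have ha₀S : ((a₀, r₀) : (E × WeakDual ℝ E) × ℝ) ∈ S := by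
    show h a₀ ≤ ((r₀ : ℝ) : EReal); rw [ha₀]
  -- base affine minorant
  have base : ∃ w₀ β₀, ∀ z, ((dprod z w₀ - β₀ : ℝ) : EReal) ≤ h z := by
    have hnot : ((a₀, r₀ - 1) : (E × WeakDual ℝ E) × ℝ) ∉ S := by
      show ¬ h a₀ ≤ ((r₀ - 1 : ℝ) : EReal)
      rw [ha₀]
      intro habs
      have : r₀ ≤ r₀ - 1 := by exact_mod_cast habs
      linarith
    obtain ⟨φ₀, s₀, u₀, hsep, hpt⟩ := sep _ hnot
    have hs₀ : s₀ < 0 := by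
      have h1 := hsep _ ha₀S
      simp only at h1 hpt
      nlinarith
    obtain ⟨w₁, hw₁⟩ := dual_char φ₀
    refine ⟨(-s₀)⁻¹ • w₁, u₀ / (-s₀), fun z => ?_⟩
    rcases eq_top_or_lt_top (h z) with htop | hlt'
    · rw [htop]; exact le_top
    have hbz : h z ≠ ⊥ := ((EReal.bot_lt_coe _).trans_le (hp z)).ne'
    set ρ : ℝ := (h z).toReal with hρ
    have hzρ : h z = (ρ : EReal) := (EReal.coe_toReal hlt'.ne hbz).symm
    have hmem : ((z, ρ) : (E × WeakDual ℝ E) × ℝ) ∈ S := by show h z ≤ _; rw [hzρ]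
    have h2 := hsep _ hmem
    simp only at h2
    have hs₀' : (0:ℝ) < -s₀ := by linarith
    have hreal : dprod z ((-s₀)⁻¹ • w₁) - u₀ / (-s₀) ≤ ρ := by
      rw [dprod_smul_right, ← hw₁]
      have e : (-s₀)⁻¹ * φ₀ z - u₀ / (-s₀) = (φ₀ z - u₀) / (-s₀) := by rw [inv_mul_eq_div, div_sub_div_same]
      rw [e, div_le_iff₀ hs₀']
      nlinarith
    rw [hzρ]
    exact_mod_cast hreal
  obtain ⟨w₀, β₀, hbase⟩ := base
  -- main separation at (z₀, c)
  have hnot : ((z₀, c) : (E × WeakDual ℝ E) × ℝ) ∉ S := not_le.2 hc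
  obtain ⟨φ, s, u, hsep, hpt⟩ := sep _ hnot
  simp only at hsep hpt
  have hsle : s ≤ 0 := by
    by_contra hpos
    push_neg at hpos
    obtain ⟨n, hn⟩ := exists_nat_gt ((u - φ a₀ - s * r₀) / s)
    have hmem : ((a₀, r₀ + n) : (E × WeakDual ℝ E) × ℝ) ∈ S := by
      show h a₀ ≤ ((r₀ + n : ℝ) : EReal)
      rw [ha₀]
      exact_mod_cast by linarith [Nat.cast_nonneg (α := ℝ) n]
    have := hsep _ hmem
    simp only at this
    rw [div_lt_iff₀ hpos] at hn
    nlinarith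
  obtain ⟨w₁, hw₁⟩ := dual_char φ
  rcases lt_or_eq_of_le hsle with hslt | hseq
  · -- non-vertical separator
    have hs' : (0:ℝ) < -s := by linarith
    refine ⟨(-s)⁻¹ • w₁, u / (-s), fun z => ?_, ?_⟩
    · rcases eq_top_or_lt_top (h z) with htop | hlt'
      · rw [htop]; exact le_top
      have hbz : h z ≠ ⊥ := ((EReal.bot_lt_coe _).trans_le (hp z)).ne'
      set ρ : ℝ := (h z).toReal with hρ
      have hzρ : h z = (ρ : EReal) := (EReal.coe_toReal hlt'.ne hbz).symm
      have hmem2 : ((z, ρ) : (E × WeakDual ℝ E) × ℝ) ∈ S := by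
        show h z ≤ ((ρ:ℝ) : EReal); rw [hzρ]
      have h2 := hsep _ hmem2
      simp only at h2
      have hreal : dprod z ((-s)⁻¹ • w₁) - u / (-s) ≤ ρ := by
        rw [dprod_smul_right, ← hw₁]
        have e : (-s)⁻¹ * φ z - u / (-s) = (φ z - u) / (-s) := by rw [inv_mul_eq_div, div_sub_div_same]
        rw [e, div_le_iff₀ hs']
        nlinarith
      rw [hzρ]
      exact_mod_cast hreal
    · rw [dprod_smul_right, ← hw₁]
      have e : (-s)⁻¹ * φ z₀ - u / (-s) = (φ z₀ - u) / (-s) := by rw [inv_mul_eq_div, div_sub_div_same]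
      rw [e, lt_div_iff₀ hs']
      nlinarith
  · -- vertical separator: combine with the base minorant
    subst hseq
    simp only [zero_mul, add_zero] at hsep hpt
    have hdpos : (0:ℝ) < φ z₀ - u := by linarith
    obtain ⟨t, htpos, htge⟩ : ∃ t : ℝ, 0 < t ∧ (c - (dprod z₀ w₀ - β₀)) / (φ z₀ - u) + 1 ≤ t :=
      ⟨max 0 ((c - (dprod z₀ w₀ - β₀)) / (φ z₀ - u)) + 1, by positivity,
        by linarith [le_max_right (0:ℝ) ((c - (dprod z₀ w₀ - β₀)) / (φ z₀ - u))]⟩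
    refine ⟨w₀ + t • w₁, β₀ + t * u, fun z => ?_, ?_⟩
    · rcases eq_top_or_lt_top (h z) with htop | hlt'
      · rw [htop]; exact le_top
      have hbz : h z ≠ ⊥ := ((EReal.bot_lt_coe _).trans_le (hp z)).ne'
      have hzρ : h z = (((h z).toReal : ℝ) : EReal) := (EReal.coe_toReal hlt'.ne hbz).symm
      have hmem2 : ((z, (h z).toReal) : (E × WeakDual ℝ E) × ℝ) ∈ S := by
        show h z ≤ (((h z).toReal : ℝ) : EReal); rw [← hzρ]
      have h2 := hsep _ hmem2
      have h3 : dprod z w₀ - β₀ ≤ (h z).toReal := by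
        have := hbase z
        rw [hzρ] at this
        exact_mod_cast this
      have hreal : dprod z (w₀ + t • w₁) - (β₀ + t * u) ≤ (h z).toReal := by
        rw [dprod_add_right, dprod_smul_right, ← hw₁]
        nlinarith
      rw [hzρ]
      exact_mod_cast hreal
    · rw [dprod_add_right, dprod_smul_right, ← hw₁]
      have h5 : ((c - (dprod z₀ w₀ - β₀)) / (φ z₀ - u)) * (φ z₀ - u) = c - (dprod z₀ w₀ - β₀) :=
        div_mul_cancel₀ _ hdpos.ne'
      have h6 : ((c - (dprod z₀ w₀ - β₀)) / (φ z₀ - u) + 1) * (φ z₀ - u) ≤ t * (φ z₀ - u) :=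
        mul_le_mul_of_nonneg_right htge hdpos.le
      rw [add_mul, h5, one_mul] at h6
      nlinarith

lemma lsc_max {f g : E × WeakDual ℝ E → EReal} (hf : LowerSemicontinuous f)
    (hg : LowerSemicontinuous g) : LowerSemicontinuous (fun z => max (f z) (g z)) := by
  intro x y hy
  rcases lt_max_iff.1 hy with h' | h'
  · exact (hf x y h').mono fun z hz => lt_max_iff.2 (Or.inl hz)
  · exact (hg x y h').mono fun z hz => lt_max_iff.2 (Or.inr hz)

lemma coe_sub_le_coe {c r : ℝ} {x : EReal} (hx : (r : EReal) ≤ x) :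
    (c : EReal) - x ≤ ((c - r : ℝ) : EReal) := by
  induction x with
  | bot => exact absurd (le_bot_iff.1 hx) (EReal.coe_ne_bot _)
  | coe ρ =>
      have : r ≤ ρ := by exact_mod_cast hx
      exact_mod_cast (by linarith : c - ρ ≤ c - r)
  | top => simp

lemma sub_le_of_coe_le {d β : ℝ} {x : EReal} (hx : ((d - β : ℝ) : EReal) ≤ x) :
    (d : EReal) - x ≤ (β : EReal) := by
  induction x with
  | bot => exact absurd (le_bot_iff.1 hx) (EReal.coe_ne_bot _)
  | coe ρ =>
      have : d - β ≤ ρ := by exact_mod_cast hx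
      exact_mod_cast (by linarith : d - ρ ≤ β)
  | top => simp


lemma lt_fitz_of_not_mem {A : Set (E × WeakDual ℝ E)} (hA : MaximalMonotoneSet A)
    {z : E × WeakDual ℝ E} (hz : z ∉ A) : (pairing z : EReal) < fitz A z := by
  have hnm : ¬ MonotoneSet (insert z A) := by
    intro hm
    have := hA.2 _ hm (Set.subset_insert z A)
    exact hz (this ▸ Set.mem_insert z A)
  unfold MonotoneSet at hnm
  push_neg at hnm
  obtain ⟨a, haB, b, hbB, hlt⟩ := hnm
  rcases Set.mem_insert_iff.1 haB with rfl | haA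
  · rcases Set.mem_insert_iff.1 hbB with rfl | hbA
    · simp at hlt
    · exact lt_fitz_of_bad hbA hlt
  · rcases Set.mem_insert_iff.1 hbB with rfl | hbA
    · rw [← flip_ident b a] at hlt
      exact lt_fitz_of_bad haA hlt
    · exact absurd (hA.1 a haA b hbA) (not_le.2 hlt)

theorem mm_iff {A : Set (E × WeakDual ℝ E)} (hne : A.Nonempty) :
    MaximalMonotoneSet A ↔
      (Representable A ∧ ∀ z : E × WeakDual ℝ E, (pairing z : EReal) ≤ fitz A z) := by
  constructor
  · intro hA
    have hNI : ∀ z, (pairing z : EReal) ≤ fitz A z := by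
      intro z
      by_cases hz : z ∈ A
      · exact le_fitz_of_mem hz
      · exact (lt_fitz_of_not_mem hA hz).le
    refine ⟨⟨fitz A, fun z => ((EReal.bot_lt_coe _).trans_le (hNI z)).ne', ?_, econvex_fitz A,
      lsc_fitz A, hNI, ?_⟩, hNI⟩
    · obtain ⟨a₀, ha₀⟩ := hne
      have hle : fitz A a₀ ≤ (pairing a₀ : EReal) :=
        fitz_le_of_rel fun a ha => hA.1 a₀ ha₀ a ha
      exact ⟨a₀, (hle.trans_lt (EReal.coe_lt_top _)).ne⟩
    · ext z
      constructor
      · intro hz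
        have hle : fitz A z ≤ (pairing z : EReal) :=
          fitz_le_of_rel fun a ha => hA.1 z hz a ha
        exact le_antisymm hle (hNI z)
      · intro hz
        by_contra hzA
        exact absurd hz (ne_of_gt (lt_fitz_of_not_mem hA hzA))
  · rintro ⟨⟨h, hbot, -, hconv, hlsc, hgep, heq⟩, hNI⟩
    have hmono : MonotoneSet A := by
      intro a ha b hb
      rw [heq] at ha hb
      exact midpoint_mono hconv hgep ha hb
    refine ⟨hmono, fun B hB hAB => Set.Subset.antisymm hAB fun z₀ hz₀ => ?_⟩
    -- z₀ is monotonically related to A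
    have hrel : ∀ a ∈ A, 0 ≤ (z₀.2 - a.2) (z₀.1 - a.1) := fun a ha => hB z₀ hz₀ a (hAB ha)
    set ht : E × WeakDual ℝ E → EReal :=
      fun z => max (h z) ((dprod z z₀ - pairing z₀ : ℝ) : EReal) with hht
    have htA : ∀ a ∈ A, ht a = (pairing a : EReal) := by
      intro a ha
      have h1 : ((dprod a z₀ - pairing z₀ : ℝ) : EReal) ≤ (pairing a : EReal) := by
        have h2 := key_ident a z₀
        have h3 : 0 ≤ (a.2 - z₀.2) (a.1 - z₀.1) := by
          rw [← flip_ident z₀ a]; exact hrel a ha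
        exact_mod_cast (by linarith : dprod a z₀ - pairing z₀ ≤ pairing a)
      have ha' : h a = (pairing a : EReal) := by rw [heq] at ha; exact ha
      simp only [hht]
      rw [ha']
      exact max_eq_left h1
    have htgeh : ∀ z, h z ≤ ht z := fun z => le_max_left _ _
    have htgep : ∀ z, (pairing z : EReal) ≤ ht z := fun z => (hgep z).trans (htgeh z)
    have htbot : ∀ z, ht z ≠ ⊥ := fun z => ((EReal.bot_lt_coe _).trans_le (htgep z)).ne'
    set k : E × WeakDual ℝ E → EReal :=
      fun w => ⨆ z, ((dprod w z : ℝ) : EReal) - ht z with hk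
    have kconv : EConvex k := by
      refine econvex_iSup fun z => ?_
      exact econvex_affine_sub z (ht z) (htbot z)
    have kgefitz : ∀ w, fitz A w ≤ k w := by
      intro w
      refine iSup₂_le fun a ha => le_iSup_of_le a (le_of_eq ?_)
      rw [htA a ha]
      norm_cast
    have kgep : ∀ w, (pairing w : EReal) ≤ k w := fun w => (hNI w).trans (kgefitz w)
    have kle0 : k z₀ ≤ (pairing z₀ : EReal) := by
      refine iSup_le fun z => ?_
      have h1 : ((dprod z z₀ - pairing z₀ : ℝ) : EReal) ≤ ht z := le_max_right _ _
      have h2 := coe_sub_le_coe (c := dprod z₀ z) h1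
      have e : dprod z₀ z - (dprod z z₀ - pairing z₀) = pairing z₀ := by
        rw [dprod_comm z₀ z]; ring
      rwa [e] at h2
    have kz₀ : k z₀ = (pairing z₀ : EReal) := le_antisymm kle0 (kgep z₀)
    have seg : ∀ z, ((dprod z z₀ - pairing z₀ : ℝ) : EReal) ≤ k z :=
      segment_lemma kconv kgep kz₀
    -- conclude h z₀ = pairing z₀
    rw [heq]
    show h z₀ = (pairing z₀ : EReal)
    by_contra hnee
    have hlt : (pairing z₀ : EReal) < h z₀ := lt_of_le_of_ne (hgep z₀) (Ne.symm hnee)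
    have hltt : ((pairing z₀ : ℝ) : EReal) < ht z₀ := hlt.trans_le (htgeh z₀)
    have htconv : EConvex ht := econvex_sup hconv (econvex_affine z₀ (pairing z₀))
    have htlsc : LowerSemicontinuous ht := by
      refine lsc_max hlsc ?_
      have hc : Continuous fun z : E × WeakDual ℝ E => dprod z z₀ - pairing z₀ := by
        have h1 : Continuous fun z : E × WeakDual ℝ E => z.2 z₀.1 :=
          (WeakDual.eval_continuous z₀.1).comp continuous_snd
        have h2 : Continuous fun z : E × WeakDual ℝ E => z₀.2 z.1 :=
          z₀.2.continuous.comp continuous_fst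
        exact (h1.add h2).sub continuous_const
      exact (continuous_coe_real_ereal.comp hc).lowerSemicontinuous
    obtain ⟨a₀, ha₀⟩ := hne
    have hta₀ : ht a₀ = ((pairing a₀ : ℝ) : EReal) := htA a₀ ha₀
    obtain ⟨w, β, hmin, hgt⟩ := fm_point htconv htlsc htgep hta₀ hltt
    have hkw : k w ≤ (β : EReal) := by
      refine iSup_le fun z => ?_
      have := hmin z
      rw [dprod_comm z w] at this
      exact sub_le_of_coe_le this
    have hseg := (seg w).trans hkw
    have hr : dprod w z₀ - pairing z₀ ≤ β := by exact_mod_cast hseg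
    rw [dprod_comm w z₀] at hr
    linarith

end AuxProof

/-- A nonempty `A ⊆ Z` is maximal monotone iff `A` is representable and of NI type,
i.e., iff `A` is representable and `h_A(z) ≥ p(z)` for every `z ∈ Z`. -/
theorem maximalMonotone_iff_representable_and_NI {X : Type*} [NormedAddCommGroup X]
    [NormedSpace ℝ X] (A : Set (X × WeakDual ℝ X)) (hne : A.Nonempty) :
    MaximalMonotoneSet A ↔
      (Representable A ∧ ∀ z : X × WeakDual ℝ X, (pairing z : EReal) ≤ fitz A z) :=
  mm_iff hne
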